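/- Let X be standard Gaussian and let g be the bounded solution of the Stein equation g'(x) − x g(x) = h(x) − E[h(X)], i.e. g(x) = e^{x²/2} ∫_{-∞}^x (h(u) − E[h(X)]) e^{-u²/2} du. If h is bounded with κ₁ = sup h − inf h, then |g(x)| ≤ κ₁ · Φ(x)(1−Φ(x))/φ(x) ≤ κ₁ (1/2)√(π/2) for all x. -/

import Mathlib

open Real MeasureTheory Set

/-- Standard Gaussian pdf. -/
noncomputable def gaussPdf (x : ℝ) : ℝ := (Real.sqrt (2 * π))⁻¹ * Real.exp (-x ^ 2 / 2)

/-- Standard Gaussian cdf. -/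
noncomputable def gaussCdf (x : ℝ) : ℝ := ∫ u in Set.Iic x, gaussPdf u

/-!
With `P` the standard Gaussian measure, `g x = (∫_{u ≤ x} h dP - Φ(x) E[h]) / φ(x)`, and the
numerator is the covariance of `h` with the indicator of `(-∞, x]`: splitting `E[h]` over
`(-∞, x]` and its complement, it is `(1 - Φ) A - Φ B` with `A ∈ [Φ inf h, Φ sup h]` and
`B ∈ [(1 - Φ) inf h, (1 - Φ) sup h]`, hence at most `κ₁ Φ (1 - Φ)` in absolute value.

For the second bound put `c = √(π/2) / 2`, so that `c φ(0) = 1/4`. The function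
`F = c φ - Φ (1 - Φ)` vanishes at `0` and at `+∞`, and `F' = φ ψ` with `ψ t = 2 Φ(t) - 1 - c t`,
which is concave on `[0, ∞)` and vanishes at `0`. So `ψ` changes sign at most once there, `F`
increases and then decreases on `[0, ∞)`, and `F ≥ 0`; negative `x` follow from `Φ(-x) = 1 - Φ(x)`.
-/

open Filter Topology ProbabilityTheory

lemma setIntegral_le_of_le_const_real {X : Type*} [MeasurableSpace X] {μ : Measure X}
    {f : X → ℝ} {s : Set X} {c : ℝ} (hs : MeasurableSet s) (hμs : μ s ≠ ⊤)
    (hf : ∀ x ∈ s, f x ≤ c) (hfint : IntegrableOn f s μ) : ∫ x in s, f x ∂μ ≤ c * μ.real s := by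
  simpa [setIntegral_const, mul_comm] using setIntegral_mono_on hfint (integrableOn_const hμs) hs hf

lemma abs_setIntegral_sub_measureReal_mul_integral_le {Ω : Type*} [MeasurableSpace Ω]
    (P : Measure Ω) [IsProbabilityMeasure P] {f : Ω → ℝ} {s : Set Ω} {a b : ℝ}
    (hs : MeasurableSet s) (hf : Integrable f P) (ha : ∀ ω, a ≤ f ω) (hb : ∀ ω, f ω ≤ b) :
    |∫ ω in s, f ω ∂P - P.real s * ∫ ω, f ω ∂P| ≤ (b - a) * (P.real s * (1 - P.real s)) := by
  set p := P.real s
  have hp₀ : 0 ≤ p := measureReal_nonneg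
  have hp₁ : 0 ≤ 1 - p := sub_nonneg.2 measureReal_le_one
  have hcompl : P.real sᶜ = 1 - p := probReal_compl_eq_one_sub hs
  have hA₁ := setIntegral_ge_of_const_le_real hs (measure_ne_top P s) (fun ω _ ↦ ha ω)
    hf.integrableOn
  have hA₂ := setIntegral_le_of_le_const_real hs (measure_ne_top P s) (fun ω _ ↦ hb ω)
    hf.integrableOn
  have hB₁ := setIntegral_ge_of_const_le_real hs.compl (measure_ne_top P sᶜ) (fun ω _ ↦ ha ω)
    hf.integrableOn
  have hB₂ := setIntegral_le_of_le_const_real hs.compl (measure_ne_top P sᶜ) (fun ω _ ↦ hb ω)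
    hf.integrableOn
  rw [hcompl] at hB₁ hB₂
  rw [← integral_add_compl hs hf, abs_le]
  constructor <;> nlinarith [mul_le_mul_of_nonneg_left hA₁ hp₁, mul_le_mul_of_nonneg_left hA₂ hp₁,
    mul_le_mul_of_nonneg_left hB₁ hp₀, mul_le_mul_of_nonneg_left hB₂ hp₀]

lemma gaussPdf_eq_gaussianPDFReal : gaussPdf = gaussianPDFReal 0 1 := by
  ext x; simp [gaussPdf, gaussianPDFReal]

lemma gaussPdf_pos (x : ℝ) : 0 < gaussPdf x := by
  unfold gaussPdf; positivity

lemma gaussPdf_neg (x : ℝ) : gaussPdf (-x) = gaussPdf x := by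
  simp [gaussPdf]

lemma hasDerivAt_gaussPdf (x : ℝ) : HasDerivAt gaussPdf (-x * gaussPdf x) x := by
  have h : HasDerivAt (fun y : ℝ ↦ -y ^ 2 / 2) (-x) x :=
    ((hasDerivAt_pow 2 x).neg.div_const 2).congr_deriv (by norm_num; ring)
  exact (h.exp.const_mul (Real.sqrt (2 * π))⁻¹).congr_deriv (by unfold gaussPdf; ring)

lemma tendsto_gaussPdf_atTop : Tendsto gaussPdf atTop (𝓝 0) := by
  have h : Tendsto (fun x : ℝ ↦ x ^ 2 / 2) atTop atTop :=
    (tendsto_pow_atTop two_ne_zero).atTop_div_const two_pos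
  have := (tendsto_exp_neg_atTop_nhds_zero.comp h).const_mul (Real.sqrt (2 * π))⁻¹
  simp only [mul_zero, Function.comp_def, ← neg_div] at this
  exact this

lemma integrable_gaussPdf : Integrable gaussPdf :=
  gaussPdf_eq_gaussianPDFReal ▸ integrable_gaussianPDFReal 0 1

lemma setIntegral_gaussianReal (f : ℝ → ℝ) (s : Set ℝ) :
    ∫ x in s, f x ∂gaussianReal 0 1 = ∫ x in s, gaussPdf x * f x := by
  rw [gaussianReal_of_var_ne_zero 0 one_ne_zero, setIntegral_withDensity_eq_setIntegral_toReal_smul'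
    s (measurable_gaussianPDF 0 1) (ae_of_all _ fun _ ↦ gaussianPDF_lt_top)]
  simp [toReal_gaussianPDF, gaussPdf_eq_gaussianPDFReal]

lemma measureReal_gaussianReal (s : Set ℝ) :
    (gaussianReal 0 1).real s = ∫ x in s, gaussPdf x := by
  simpa using setIntegral_gaussianReal (fun _ ↦ 1) s

lemma gaussCdf_eq_measureReal (x : ℝ) : gaussCdf x = (gaussianReal 0 1).real (Iic x) :=
  (measureReal_gaussianReal _).symm

lemma gaussCdf_eq_cdf : gaussCdf = cdf (gaussianReal 0 1) := by
  ext x; rw [gaussCdf_eq_measureReal, cdf_eq_real]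

lemma gaussCdf_neg (x : ℝ) : gaussCdf (-x) = 1 - gaussCdf x := by
  calc gaussCdf (-x) = ∫ u in Ioi x, gaussPdf u := by
        rw [gaussCdf, ← integral_comp_neg_Ioi]; simp_rw [gaussPdf_neg]
    _ = 1 - gaussCdf x := by
        rw [← measureReal_gaussianReal, ← compl_Iic, probReal_compl_eq_one_sub measurableSet_Iic,
          gaussCdf_eq_measureReal]

lemma gaussCdf_zero : gaussCdf 0 = 1 / 2 := by
  linarith [neg_zero (G := ℝ) ▸ gaussCdf_neg 0]

lemma hasDerivAt_gaussCdf (x : ℝ) : HasDerivAt gaussCdf (gaussPdf x) x := by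
  have hcont : Continuous gaussPdf := by unfold gaussPdf; fun_prop
  have hΦ : ∀ y, gaussCdf y = gaussCdf 0 + ∫ u in (0 : ℝ)..y, gaussPdf u := fun y ↦ by
    rw [gaussCdf, gaussCdf, ← intervalIntegral.integral_Iic_sub_Iic
      integrable_gaussPdf.integrableOn integrable_gaussPdf.integrableOn]
    ring
  rw [show gaussCdf = _ from funext hΦ]
  exact (intervalIntegral.integral_hasDerivAt_right integrable_gaussPdf.intervalIntegrable
    (hcont.stronglyMeasurableAtFilter _ _) hcont.continuousAt).const_add _

lemma nonneg_of_hasDerivAt_mul_of_concaveOn {F w ψ : ℝ → ℝ}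
    (hF : ∀ t, HasDerivAt F (w t * ψ t) t) (hw : ∀ t, 0 ≤ w t)
    (hψ : ConcaveOn ℝ (Ici 0) ψ) (hψ₀ : ψ 0 = 0) (hF₀ : F 0 = 0)
    (hF_lim : Tendsto F atTop (𝓝 0)) {x : ℝ} (hx : 0 ≤ x) : 0 ≤ F x := by
  have hFc : Continuous F := continuous_iff_continuousAt.2 fun t ↦ (hF t).continuousAt
  have hF' : ∀ D : Set ℝ, ∀ t ∈ interior D, HasDerivWithinAt F (w t * ψ t) (interior D) t :=
    fun _ t _ ↦ (hF t).hasDerivWithinAt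
  rcases le_or_gt 0 (ψ x) with hψx | hψx
  · have hmono : MonotoneOn F (Icc 0 x) := by
      refine monotoneOn_of_hasDerivWithinAt_nonneg (convex_Icc 0 x) hFc.continuousOn
        (hF' _) fun t ht ↦ mul_nonneg (hw t) ?_
      rw [interior_Icc] at ht
      have := hψ.ge_on_segment self_mem_Ici (mem_Ici.2 hx)
        (segment_eq_Icc hx ▸ Ioo_subset_Icc_self ht)
      rw [hψ₀] at this
      exact le_trans (le_min le_rfl hψx) this
    simpa [hF₀] using hmono (left_mem_Icc.2 hx) (right_mem_Icc.2 hx) hx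
  · have hanti : AntitoneOn F (Ici x) := by
      refine antitoneOn_of_hasDerivWithinAt_nonpos (convex_Ici x) hFc.continuousOn
        (hF' _) fun t ht ↦ mul_nonpos_of_nonneg_of_nonpos (hw t) ?_
      rw [interior_Ici] at ht
      have ht' : x ∈ segment ℝ 0 t := (segment_eq_Icc (hx.trans ht.out.le)).symm ▸ ⟨hx, ht.out.le⟩
      have := hψ.ge_on_segment self_mem_Ici (mem_Ici.2 (hx.trans ht.out.le)) ht'
      rw [hψ₀] at this
      by_contra! hpos
      linarith [min_eq_left hpos.le]
    exact le_of_tendsto hF_lim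
      (eventually_ge_atTop x |>.mono fun t ht ↦ hanti self_mem_Ici (mem_Ici.2 ht) ht)

lemma half_sqrt_pi_div_two_mul_gaussPdf_zero : 1 / 2 * √(π / 2) * gaussPdf 0 = 1 / 4 := by
  have h : √(2 * π) = 2 * √(π / 2) := by
    rw [show 2 * π = 2 ^ 2 * (π / 2) by ring, sqrt_mul (by positivity), sqrt_sq zero_le_two]
  have : 0 < √(π / 2) := by positivity
  simp only [gaussPdf, h]
  field_simp
  norm_num

lemma concaveOn_two_mul_gaussCdf_sub_linear (c : ℝ) :
    ConcaveOn ℝ (Ici 0) fun t ↦ 2 * gaussCdf t - 1 - c * t := by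
  have hΦ' : ∀ t, HasDerivAt (fun t ↦ 2 * gaussCdf t - 1 - c * t) (2 * gaussPdf t - c) t :=
    fun t ↦ ((((hasDerivAt_gaussCdf t).const_mul 2).sub_const 1).sub
      ((hasDerivAt_id t).const_mul c)).congr_deriv (by simp)
  refine concaveOn_of_hasDerivWithinAt2_nonpos (convex_Ici 0)
    (fun t _ ↦ (hΦ' t).continuousAt.continuousWithinAt) (fun t _ ↦ (hΦ' t).hasDerivWithinAt)
    (fun t _ ↦ (((hasDerivAt_gaussPdf t).const_mul 2).sub_const c).hasDerivWithinAt)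
    fun t ht ↦ ?_
  rw [interior_Ici] at ht
  nlinarith [gaussPdf_pos t, ht.out]

lemma gaussCdf_mul_one_sub_le_of_nonneg {x : ℝ} (hx : 0 ≤ x) :
    gaussCdf x * (1 - gaussCdf x) ≤ 1 / 2 * √(π / 2) * gaussPdf x := by
  set c := 1 / 2 * √(π / 2)
  have hF : ∀ t, HasDerivAt (fun t ↦ c * gaussPdf t - gaussCdf t * (1 - gaussCdf t))
      (gaussPdf t * (2 * gaussCdf t - 1 - c * t)) t := fun t ↦
    (((hasDerivAt_gaussPdf t).const_mul c).sub
      ((hasDerivAt_gaussCdf t).mul ((hasDerivAt_gaussCdf t).const_sub 1))).congr_deriv (by ring)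
  have hF_lim : Tendsto (fun t ↦ c * gaussPdf t - gaussCdf t * (1 - gaussCdf t)) atTop (𝓝 0) := by
    have hΦ := gaussCdf_eq_cdf ▸ tendsto_cdf_atTop (gaussianReal 0 1)
    simpa using (tendsto_gaussPdf_atTop.const_mul c).sub (hΦ.mul (hΦ.const_sub 1))
  have := nonneg_of_hasDerivAt_mul_of_concaveOn hF (fun t ↦ (gaussPdf_pos t).le)
    (concaveOn_two_mul_gaussCdf_sub_linear c) (by simp [gaussCdf_zero])
    (by simp only [half_sqrt_pi_div_two_mul_gaussPdf_zero, c, gaussCdf_zero]; norm_num) hF_lim hx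
  linarith

lemma gaussCdf_mul_one_sub_le (x : ℝ) :
    gaussCdf x * (1 - gaussCdf x) ≤ 1 / 2 * √(π / 2) * gaussPdf x := by
  rcases le_total 0 x with hx | hx
  · exact gaussCdf_mul_one_sub_le_of_nonneg hx
  · have := gaussCdf_mul_one_sub_le_of_nonneg (neg_nonneg.2 hx)
    rw [gaussCdf_neg, gaussPdf_neg] at this
    linarith

lemma exp_mul_setIntegral_Iic_eq_div_gaussPdf {f : ℝ → ℝ} (hf : Integrable f (gaussianReal 0 1))
    (c x : ℝ) :
    rexp (x ^ 2 / 2) * ∫ u in Iic x, (f u - c) * rexp (-u ^ 2 / 2) =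
      (∫ u in Iic x, f u ∂gaussianReal 0 1 - (gaussianReal 0 1).real (Iic x) * c) / gaussPdf x := by
  have hsub : ∫ u in Iic x, (f u - c) ∂gaussianReal 0 1 =
      ∫ u in Iic x, f u ∂gaussianReal 0 1 - (gaussianReal 0 1).real (Iic x) * c := by
    rw [integral_sub hf.integrableOn (integrable_const c).integrableOn, setIntegral_const,
      smul_eq_mul]
  have hpdf : ∀ u, (f u - c) * rexp (-u ^ 2 / 2) = √(2 * π) * (gaussPdf u * (f u - c)) := fun u ↦ by
    unfold gaussPdf
    field_simp
  simp_rw [hpdf]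
  rw [integral_const_mul, ← setIntegral_gaussianReal, hsub, gaussPdf,
    show -x ^ 2 / 2 = -(x ^ 2 / 2) by ring, exp_neg]
  field_simp

/-- Bound on the solution of the Gaussian Stein equation for bounded `h`:
`|g(x)| ≤ κ₁ Φ(x)(1-Φ(x))/φ(x) ≤ κ₁ (1/2)√(π/2)`, with `κ₁ = sup h - inf h`. -/
theorem stmt2 (h : ℝ → ℝ) (hmeas : Measurable h)
    (hbdd : BddAbove (Set.range h)) (hbdd' : BddBelow (Set.range h))
    (κ₁ : ℝ) (hκ₁ : κ₁ = (⨆ y, h y) - ⨅ y, h y)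
    (g : ℝ → ℝ)
    (hg : ∀ x, g x = Real.exp (x ^ 2 / 2) *
      ∫ u in Set.Iic x, (h u - ∫ v, h v * gaussPdf v) * Real.exp (-u ^ 2 / 2)) :
    ∀ x : ℝ,
      |g x| ≤ κ₁ * (gaussCdf x * (1 - gaussCdf x) / gaussPdf x) ∧
      κ₁ * (gaussCdf x * (1 - gaussCdf x) / gaussPdf x) ≤ κ₁ * ((1 / 2) * Real.sqrt (π / 2)) := by
  intro x
  have hle_sup : ∀ u, h u ≤ ⨆ y, h y := le_ciSup hbdd
  have hinf_le : ∀ u, ⨅ y, h y ≤ h u := ciInf_le hbdd'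
  have hκ₁_nonneg : 0 ≤ κ₁ := hκ₁ ▸ sub_nonneg.2 (ciInf_le_ciSup hbdd' hbdd)
  have hint : Integrable h (gaussianReal 0 1) :=
    .of_mem_Icc _ _ hmeas.aemeasurable (ae_of_all _ fun u ↦ ⟨hinf_le u, hle_sup u⟩)
  have hmean : ∫ v, h v * gaussPdf v = ∫ v, h v ∂gaussianReal 0 1 := by
    simpa [mul_comm] using (setIntegral_gaussianReal h univ).symm
  have hcov := abs_setIntegral_sub_measureReal_mul_integral_le (s := Iic x) _ measurableSet_Iic
    hint hinf_le hle_sup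
  rw [← hκ₁, ← gaussCdf_eq_measureReal] at hcov
  refine ⟨?_, mul_le_mul_of_nonneg_left
    ((div_le_iff₀ (gaussPdf_pos x)).2 (gaussCdf_mul_one_sub_le x)) hκ₁_nonneg⟩
  rw [hg, hmean, exp_mul_setIntegral_Iic_eq_div_gaussPdf hint, ← gaussCdf_eq_measureReal, abs_div,
    abs_of_pos (gaussPdf_pos x), mul_div_assoc']
  exact div_le_div_of_nonneg_right hcov (gaussPdf_pos x).le
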